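/- arXiv:2605.04987 — 4 statements merged into one kernel-verified Lean document; each statement's English description precedes it below -/
import Mathlib

section
/- If F is a family of permutations of [n] whose matching number is less than s (i.e., F contains no s pairwise disjoint permutations), then |F| ≤ (s-1)·(n-1)!. -/
open Fin.NatCast Fin.CommRing

private lemma finRotate_pow_apply {m : ℕ} (k : ℕ) (i : Fin (m + 1)) :
    ((finRotate (m + 1)) ^ k) i = i + (k : Fin (m + 1)) := by
  induction k with
  | zero => simp
  | succ k ih =>
      rw [pow_succ', Equiv.Perm.mul_apply, ih, finRotate_succ_apply]
      push_cast
      ring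

/-- **Deza–Frankl bound.** If a family `F` of permutations of `[n]` contains no `s`
pairwise disjoint permutations (two permutations being disjoint when they agree
nowhere), then `|F| ≤ (s-1)·(n-1)!`. -/
theorem emc_simple_bound {n s : ℕ} (F : Finset (Equiv.Perm (Fin n)))
    (hν : ∀ M : Finset (Equiv.Perm (Fin n)), M ⊆ F →
      (∀ σ ∈ M, ∀ π ∈ M, σ ≠ π → ∀ i, σ i ≠ π i) → M.card < s) :
    F.card ≤ (s - 1) * Nat.factorial (n - 1) := by
  -- s ≥ 1
  have hs : 1 ≤ s := by
    have := hν ∅ (by simp) (by simp)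
    simpa using Nat.one_le_iff_ne_zero.mpr (by omega)
  match n with
  | 0 =>
      -- all permutations of Fin 0 are equal; F has at most one element
      have hF : F.card < s := by
        refine hν F le_rfl ?_
        intro σ _ π _ hne i
        exact absurd (Subsingleton.elim σ π) hne
      simpa using by omega
  | Nat.succ m =>
      set c : Equiv.Perm (Fin (m + 1)) := finRotate (m + 1) with hc
      set rep : Equiv.Perm (Fin (m + 1)) → Equiv.Perm (Fin (m + 1)) :=
        fun σ => σ * c ^ (σ⁻¹ 0).val with hrep
      have hrep0 : ∀ σ, rep σ 0 = 0 := by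
        intro σ
        simp only [hrep, Equiv.Perm.mul_apply, hc, finRotate_pow_apply]
        rw [zero_add, Fin.cast_val_eq_self]
        exact Equiv.apply_symm_apply σ 0
      -- fibers of rep are pairwise disjoint families
      have hfiber : ∀ r ∈ F.image rep,
          (F.filter fun σ => rep σ = r).card ≤ s - 1 := by
        intro r _
        have hlt : (F.filter fun σ => rep σ = r).card < s := by
          refine hν _ (Finset.filter_subset _ _) ?_
          intro σ hσ π hπ hne i hi
          rw [Finset.mem_filter] at hσ hπ
          apply hne
          have hr : rep σ = rep π := hσ.2.trans hπ.2.symm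
          have e1 : rep σ ((c ^ (σ⁻¹ 0).val)⁻¹ i) = σ i := by
            simp only [hrep, Equiv.Perm.mul_apply, Equiv.Perm.coe_inv, Equiv.apply_symm_apply]
          have e2 : rep π ((c ^ (π⁻¹ 0).val)⁻¹ i) = π i := by
            simp only [hrep, Equiv.Perm.mul_apply, Equiv.Perm.coe_inv, Equiv.apply_symm_apply]
          have hj : (c ^ (σ⁻¹ 0).val)⁻¹ i = (c ^ (π⁻¹ 0).val)⁻¹ i := by
            apply (rep σ).injective
            rw [e1, hi, hr, e2]
          have hkeq : ((σ⁻¹ 0).val : Fin (m + 1)) = ((π⁻¹ 0).val : Fin (m + 1)) := by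
            have f1 : (c ^ (σ⁻¹ 0).val) ((c ^ (σ⁻¹ 0).val)⁻¹ i) = i :=
              Equiv.apply_symm_apply _ _
            have f2 : (c ^ (π⁻¹ 0).val) ((c ^ (σ⁻¹ 0).val)⁻¹ i) = i := by
              rw [hj]; exact Equiv.apply_symm_apply _ _
            rw [hc, finRotate_pow_apply] at f1 f2
            exact add_left_cancel (f1.trans f2.symm)
          have hk : (σ⁻¹ 0).val = (π⁻¹ 0).val := by
            have h1 := Fin.val_cast_of_lt (n := m + 1) (σ⁻¹ 0).isLt
            have h2 := Fin.val_cast_of_lt (n := m + 1) (π⁻¹ 0).isLt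
            rw [← h1, ← h2, hkeq]
          have hσπ : σ * c ^ (σ⁻¹ 0).val = π * c ^ (π⁻¹ 0).val := by
            have := hσ.2.trans hπ.2.symm
            simpa only [hrep] using this
          rw [hk] at hσπ
          exact mul_right_cancel hσπ
        omega
      have hmain := Finset.card_le_mul_card_image F (s - 1) hfiber
      -- the image consists of permutations fixing 0, so it has ≤ m! elements
      have himg : (F.image rep).card ≤ Nat.factorial m := by
        have : (F.image rep).card ≤ (Finset.univ : Finset (Equiv.Perm (Fin m))).card := by
          apply Finset.card_le_card_of_injOn (fun r => (Equiv.Perm.decomposeFin r).2)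
            (fun _ _ => Finset.mem_univ _)
          intro r hr r' hr' hrr
          have h0 : ∀ x ∈ F.image rep, x 0 = 0 := by
            intro x hx
            obtain ⟨σ, _, rfl⟩ := Finset.mem_image.mp hx
            exact hrep0 σ
          have e1 : (Equiv.Perm.decomposeFin r).1 = r 0 := by
            conv_rhs => rw [← Equiv.Perm.decomposeFin.symm_apply_apply r]
            rw [Equiv.Perm.decomposeFin_symm_apply_zero (Equiv.Perm.decomposeFin r).1
              (Equiv.Perm.decomposeFin r).2]
          have e2 : (Equiv.Perm.decomposeFin r').1 = r' 0 := by
            conv_rhs => rw [← Equiv.Perm.decomposeFin.symm_apply_apply r']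
            rw [Equiv.Perm.decomposeFin_symm_apply_zero (Equiv.Perm.decomposeFin r').1
              (Equiv.Perm.decomposeFin r').2]
          have hfst : (Equiv.Perm.decomposeFin r).1 = (Equiv.Perm.decomposeFin r').1 := by
            rw [e1, e2, h0 r hr, h0 r' hr']
          exact Equiv.Perm.decomposeFin.injective (Prod.ext hfst hrr)
        simpa [Fintype.card_perm] using this
      calc F.card ≤ (s - 1) * (F.image rep).card := hmain
        _ ≤ (s - 1) * Nat.factorial m := Nat.mul_le_mul_left _ himg
        _ = (s - 1) * Nat.factorial (m + 1 - 1) := by simp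
end

section
/- Fix a real r ≥ 1 and a family F of subsets of a finite ground set. Let X be a set that is inclusion-maximal among sets satisfying |F(X)| ≥ r^{-|X|}·|F|. Then F(X) is r-spread. -/
/-- For a family `F` of finite sets and a set `X`,
`F(X) := {F \ X : F ∈ F, X ⊆ F}`. -/
def restrictAt {α : Type*} [DecidableEq α] (F : Finset (Finset α)) (X : Finset α) :
    Finset (Finset α) :=
  (F.filter fun A => X ⊆ A).image fun A => A \ X

/-- A family `G` is `r`-spread if `|G(Y)| ≤ r^{-|Y|}·|G|` for every set `Y`. -/
def IsSpread {α : Type*} [DecidableEq α] (r : ℝ) (F : Finset (Finset α)) : Prop :=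
  ∀ Y : Finset α, ((restrictAt F Y).card : ℝ) ≤ r ^ (-(Y.card : ℤ)) * F.card

/-! For `Y` meeting `X` the family `F(X)(Y)` is empty. Otherwise `F(X)(Y) ⊆ F(X ∪ Y)`, and for
nonempty `Y` maximality of `X` gives
`|F(X ∪ Y)| < r^{-|X|-|Y|}·|F| ≤ r^{-|Y|}·|F(X)|`. -/

section Restriction

variable {α : Type*} [DecidableEq α]

@[simp]
lemma restrictAt_empty (F : Finset (Finset α)) : restrictAt F ∅ = F := by
  simp [restrictAt]

lemma disjoint_of_mem_restrictAt {F : Finset (Finset α)} {X B : Finset α}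
    (hB : B ∈ restrictAt F X) : Disjoint B X := by
  obtain ⟨A, -, rfl⟩ := Finset.mem_image.mp hB
  exact Finset.sdiff_disjoint

lemma restrictAt_eq_empty {G : Finset (Finset α)} {Y : Finset α}
    (hG : ∀ B ∈ G, ¬ Y ⊆ B) : restrictAt G Y = ∅ := by
  rw [restrictAt, Finset.image_eq_empty, Finset.filter_eq_empty_iff]
  exact hG

lemma restrictAt_restrictAt_eq_empty_of_not_disjoint (F : Finset (Finset α))
    {X Y : Finset α} (h : ¬ Disjoint Y X) : restrictAt (restrictAt F X) Y = ∅ :=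
  restrictAt_eq_empty fun _ hB hYB =>
    h ((disjoint_of_mem_restrictAt hB).mono_left hYB)

lemma restrictAt_restrictAt_subset (F : Finset (Finset α)) (X Y : Finset α) :
    restrictAt (restrictAt F X) Y ⊆ restrictAt F (X ∪ Y) := by
  intro C hC
  simp only [restrictAt, Finset.mem_image, Finset.mem_filter] at hC ⊢
  obtain ⟨_, ⟨⟨A, ⟨hA, hXA⟩, rfl⟩, hYB⟩, rfl⟩ := hC
  exact ⟨A, ⟨hA, Finset.union_subset hXA (hYB.trans Finset.sdiff_subset)⟩,
    (sdiff_sdiff A X Y).symm⟩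

end Restriction

theorem spread_maximal_restriction_general {α : Type*} [DecidableEq α] {r : ℝ}
    (hr : 1 ≤ r) (F : Finset (Finset α)) (X : Finset α)
    (hX : r ^ (-(X.card : ℤ)) * F.card ≤ ((restrictAt F X).card : ℝ))
    (hmax : ∀ Y : Finset α, X ⊂ Y →
      ¬ (r ^ (-(Y.card : ℤ)) * F.card ≤ ((restrictAt F Y).card : ℝ))) :
    IsSpread r (restrictAt F X) := by
  have hr0 : 0 < r := one_pos.trans_le hr
  intro Y
  by_cases hdisj : Disjoint Y X
  swap
  · rw [restrictAt_restrictAt_eq_empty_of_not_disjoint F hdisj, Finset.card_empty, Nat.cast_zero]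
    positivity
  obtain rfl | ⟨y, hy⟩ := Y.eq_empty_or_nonempty
  · simp
  have hXY : X ⊂ X ∪ Y := Finset.ssubset_iff_of_subset Finset.subset_union_left |>.mpr
    ⟨y, Finset.mem_union_right _ hy, Finset.disjoint_left.mp hdisj hy⟩
  calc ((restrictAt (restrictAt F X) Y).card : ℝ)
      ≤ (restrictAt F (X ∪ Y)).card := by
        exact_mod_cast Finset.card_le_card (restrictAt_restrictAt_subset F X Y)
    _ ≤ r ^ (-((X ∪ Y).card : ℤ)) * F.card := (not_le.mp (hmax _ hXY)).le
    _ = r ^ (-(Y.card : ℤ)) * (r ^ (-(X.card : ℤ)) * F.card) := by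
        rw [Finset.card_union_of_disjoint hdisj.symm, Nat.cast_add, neg_add,
          zpow_add₀ hr0.ne']
        ring
    _ ≤ r ^ (-(Y.card : ℤ)) * (restrictAt F X).card := by gcongr

/-- **Lemma 7 of the paper.** Fix `r ≥ 1` and a family `F` of subsets of a
finite ground set.  If `X` is inclusion-maximal among sets satisfying
`|F(X)| ≥ r^{-|X|}·|F|`, then `F(X)` is `r`-spread. -/
theorem spread_maximal_restriction {α : Type*} [DecidableEq α] [Fintype α] {r : ℝ}
    (hr : 1 ≤ r) (F : Finset (Finset α)) (X : Finset α)
    (hX : r ^ (-(X.card : ℤ)) * F.card ≤ ((restrictAt F X).card : ℝ))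
    (hmax : ∀ Y : Finset α, X ⊂ Y →
      ¬ (r ^ (-(Y.card : ℤ)) * F.card ≤ ((restrictAt F Y).card : ℝ))) :
    IsSpread r (restrictAt F X) :=
  spread_maximal_restriction_general hr F X hX hmax
end

section
/- The family Σ_n of all permutations of [n], viewed as the family of their graphs (n-element subsets of [n]×[n]), is (n/4, n/4)-spread: for every set A ⊂ [n]×[n] with |A| ≤ n/4, the family Σ_n(A) is (n/4)-spread. -/
/-- The graph of a permutation `σ` of `[n]`, i.e. the set
`{(i, σ i) : i ∈ [n]} ⊆ [n] × [n]`. -/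
def permGraph {n : ℕ} (σ : Equiv.Perm (Fin n)) : Finset (Fin n × Fin n) :=
  Finset.univ.image fun i => (i, σ i)

open Finset

lemma mem_permGraph {n : ℕ} (σ : Equiv.Perm (Fin n)) (p : Fin n × Fin n) :
    p ∈ permGraph σ ↔ σ p.1 = p.2 := by
  simp only [permGraph, mem_image, mem_univ, true_and, Prod.ext_iff]
  constructor
  · rintro ⟨i, rfl, h⟩; exact h
  · intro h; exact ⟨p.1, rfl, h⟩

lemma permGraph_injective {n : ℕ} : Function.Injective (permGraph (n := n)) := by
  intro σ τ h
  apply Equiv.ext; intro i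
  have : ((i, σ i) : Fin n × Fin n) ∈ permGraph τ := by
    rw [← h, mem_permGraph]
  exact ((mem_permGraph _ _).mp this).symm

lemma card_permGraph {n : ℕ} (σ : Equiv.Perm (Fin n)) : (permGraph σ).card = n := by
  rw [permGraph, Finset.card_image_of_injective _ (fun a b h => (Prod.ext_iff.mp h).1),
    Finset.card_univ, Fintype.card_fin]

lemma card_restrictAt' {α : Type*} [DecidableEq α] (F : Finset (Finset α)) (X : Finset α) :
    (restrictAt F X).card = (F.filter fun A => X ⊆ A).card := by
  apply Finset.card_image_of_injOn
  intro A hA B hB h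
  simp only [coe_filter, Set.mem_setOf_eq] at hA hB
  simp only at h
  rw [← Finset.sdiff_union_of_subset hA.2, ← Finset.sdiff_union_of_subset hB.2, h]

def permCount {n : ℕ} (B : Finset (Fin n × Fin n)) : ℕ :=
  ((Finset.univ : Finset (Equiv.Perm (Fin n))).filter fun σ => B ⊆ permGraph σ).card

lemma restrictAt_perms_eq {n : ℕ} (A : Finset (Fin n × Fin n)) :
    restrictAt ((Finset.univ : Finset (Equiv.Perm (Fin n))).image permGraph) A
      = ((Finset.univ : Finset (Equiv.Perm (Fin n))).filter
          fun σ => A ⊆ permGraph σ).image fun σ => permGraph σ \ A := by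
  rw [restrictAt, filter_image, Finset.image_image]
  rfl

lemma injOn_graph_sdiff {n : ℕ} (A : Finset (Fin n × Fin n)) :
    Set.InjOn (fun σ : Equiv.Perm (Fin n) => permGraph σ \ A)
      ((Finset.univ : Finset (Equiv.Perm (Fin n))).filter fun σ => A ⊆ permGraph σ) := by
  intro σ hσ τ hτ h
  simp only [coe_filter, Set.mem_setOf_eq] at hσ hτ
  simp only at h
  apply permGraph_injective
  rw [← Finset.sdiff_union_of_subset hσ.2, ← Finset.sdiff_union_of_subset hτ.2, h]

lemma card_restrict_perms {n : ℕ} (A : Finset (Fin n × Fin n)) :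
    (restrictAt ((Finset.univ : Finset (Equiv.Perm (Fin n))).image permGraph) A).card
      = permCount A := by
  rw [restrictAt_perms_eq, permCount]
  apply Finset.card_image_of_injOn (injOn_graph_sdiff A)

lemma card_restrict_restrict {n : ℕ} (A Y : Finset (Fin n × Fin n)) :
    (restrictAt (restrictAt ((Finset.univ : Finset (Equiv.Perm (Fin n))).image permGraph) A)
        Y).card
      = ((Finset.univ : Finset (Equiv.Perm (Fin n))).filter
          fun σ => A ⊆ permGraph σ ∧ Y ⊆ permGraph σ \ A).card := by
  rw [card_restrictAt', restrictAt_perms_eq, filter_image,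
    Finset.card_image_of_injOn ((injOn_graph_sdiff A).mono (by
      intro σ hσ
      simp only [coe_filter, Set.mem_setOf_eq, mem_filter] at hσ ⊢
      exact ⟨hσ.1.1, hσ.1.2⟩)), Finset.filter_filter]

lemma key_step {n : ℕ} (B : Finset (Fin n × Fin n)) (p : Fin n × Fin n) (hp : p ∉ B) :
    (n - B.card) * permCount (insert p B) ≤ permCount B := by
  rcases Nat.eq_zero_or_pos (permCount (insert p B)) with h0 | hpos
  · rw [h0, Nat.mul_zero]; exact Nat.zero_le _
  obtain ⟨σ0, hσ0⟩ : ∃ σ0 : Equiv.Perm (Fin n), insert p B ⊆ permGraph σ0 := by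
    rw [permCount] at hpos
    obtain ⟨σ0, hσ0⟩ := Finset.card_pos.mp hpos
    exact ⟨σ0, (Finset.mem_filter.mp hσ0).2⟩
  obtain ⟨i, j⟩ := p
  have hij : σ0 i = j := (mem_permGraph _ _).mp (hσ0 (Finset.mem_insert_self _ _))
  have hjB : j ∉ B.image Prod.snd := by
    intro hj
    obtain ⟨q, hqB, hq2⟩ := Finset.mem_image.mp hj
    have h1 : σ0 q.1 = q.2 := (mem_permGraph _ _).mp (hσ0 (Finset.mem_insert_of_mem hqB))
    have h2 : q.1 = i := σ0.injective (by rw [h1, hq2, hij])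
    apply hp
    have : q = (i, j) := Prod.ext h2 hq2
    rwa [← this]
  set S := (Finset.univ : Finset (Fin n)) \ B.image Prod.snd with hS
  have hScard : n - B.card ≤ S.card := by
    have h1 : (B.image Prod.snd).card ≤ B.card := Finset.card_image_le
    have h2 : S.card = n - (B.image Prod.snd).card := by
      rw [hS, Finset.card_sdiff_of_subset (Finset.subset_univ _), Finset.card_univ, Fintype.card_fin]
    omega
  calc (n - B.card) * permCount (insert (i, j) B)
      ≤ S.card * permCount (insert (i, j) B) := Nat.mul_le_mul_right _ hScard
    _ = (S ×ˢ ((Finset.univ : Finset (Equiv.Perm (Fin n))).filter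
          fun σ => insert (i, j) B ⊆ permGraph σ)).card := by
        rw [Finset.card_product]; rfl
    _ ≤ permCount B := by
        apply Finset.card_le_card_of_injOn (fun q => Equiv.swap j q.1 * q.2)
        · rintro ⟨j', σ⟩ hq
          rw [Finset.mem_coe, Finset.mem_product] at hq
          obtain ⟨hj', hσ⟩ := hq
          rw [Finset.mem_filter] at hσ
          rw [Finset.mem_coe, Finset.mem_filter]
          refine ⟨Finset.mem_univ _, ?_⟩
          intro q hqB
          rw [mem_permGraph]
          have h1 : σ q.1 = q.2 := (mem_permGraph _ _).mp (hσ.2 (Finset.mem_insert_of_mem hqB))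
          have h2 : q.2 ∈ B.image Prod.snd := Finset.mem_image_of_mem _ hqB
          have hne1 : q.2 ≠ j := fun h => hjB (h ▸ h2)
          have hne2 : q.2 ≠ j' := by
            intro h
            rw [hS, Finset.mem_sdiff] at hj'
            exact hj'.2 (h ▸ h2)
          simp only [Equiv.Perm.mul_apply, h1]
          exact Equiv.swap_apply_of_ne_of_ne hne1 hne2
        · rintro ⟨j1, σ1⟩ hq1 ⟨j2, σ2⟩ hq2 heq
          simp only [coe_product, Set.mem_prod, mem_coe, Finset.mem_filter] at hq1 hq2
          simp only at heq
          have e1 : σ1 i = j := (mem_permGraph _ _).mp (hq1.2.2 (Finset.mem_insert_self _ _))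
          have e2 : σ2 i = j := (mem_permGraph _ _).mp (hq2.2.2 (Finset.mem_insert_self _ _))
          have hj12 : j1 = j2 := by
            have t1 : (Equiv.swap j j1 * σ1) i = j1 := by
              simp [Equiv.Perm.mul_apply, e1]
            have t2 : (Equiv.swap j j2 * σ2) i = j2 := by
              simp [Equiv.Perm.mul_apply, e2]
            rw [← t1, ← t2, heq]
          subst hj12
          have : σ1 = σ2 := mul_left_cancel heq
          rw [this]

lemma descFactorial_mul_le {n : ℕ} (A : Finset (Fin n × Fin n)) :
    ∀ Y : Finset (Fin n × Fin n), Disjoint A Y →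
      (n - A.card).descFactorial Y.card * permCount (A ∪ Y) ≤ permCount A := by
  intro Y
  induction Y using Finset.induction_on with
  | empty => simp [Nat.descFactorial]
  | @insert q Y hq ih =>
    intro hdisj
    have hdisj' : Disjoint A Y := hdisj.mono_right (Finset.subset_insert _ _)
    have hqA : q ∉ A := fun h =>
      Finset.disjoint_left.mp hdisj h (Finset.mem_insert_self _ _)
    have hqAY : q ∉ A ∪ Y := by
      simp only [Finset.mem_union]
      push_neg
      exact ⟨hqA, hq⟩
    have hcard : (A ∪ Y).card = A.card + Y.card := Finset.card_union_of_disjoint hdisj'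
    have hsub : n - A.card - Y.card = n - (A ∪ Y).card := by omega
    calc (n - A.card).descFactorial (insert q Y).card * permCount (A ∪ insert q Y)
        = (n - A.card).descFactorial Y.card *
            ((n - (A ∪ Y).card) * permCount (insert q (A ∪ Y))) := by
          rw [Finset.card_insert_of_notMem hq, Nat.descFactorial_succ, hsub,
            Finset.union_insert]
          ring
      _ ≤ (n - A.card).descFactorial Y.card * permCount (A ∪ Y) :=
          Nat.mul_le_mul_left _ (key_step _ _ hqAY)
      _ ≤ permCount A := ih hdisj'

lemma factorial_pow_le_descFactorial_pow (m y : ℕ) (h : y ≤ m) :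
    m.factorial ^ y ≤ m.descFactorial y ^ m := by
  have key : (m - y).factorial ^ y ≤ m.descFactorial y ^ (m - y) := by
    calc (m - y).factorial ^ y ≤ ((m - y) ^ (m - y)) ^ y :=
          Nat.pow_le_pow_left (Nat.factorial_le_pow _) _
      _ = ((m - y) + 1 - 1) ^ ((m - y) * y) := by rw [← pow_mul]; norm_num
      _ ≤ ((m - y + 1) ^ y) ^ (m - y) := by
          rw [← pow_mul, Nat.mul_comm]
          exact Nat.pow_le_pow_left (by omega) _
      _ ≤ m.descFactorial y ^ (m - y) := by
          apply Nat.pow_le_pow_left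
          have := Nat.pow_sub_le_descFactorial m y
          have he : m + 1 - y = m - y + 1 := by omega
          rwa [he] at this
  calc m.factorial ^ y = ((m - y).factorial * m.descFactorial y) ^ y := by
        rw [Nat.factorial_mul_descFactorial h]
    _ = (m - y).factorial ^ y * m.descFactorial y ^ y := mul_pow _ _ _
    _ ≤ m.descFactorial y ^ (m - y) * m.descFactorial y ^ y :=
        Nat.mul_le_mul_right _ key
    _ = m.descFactorial y ^ m := by rw [← pow_add]; congr 1; omega

lemma pow_le_three_pow_mul_factorial : ∀ m : ℕ, (m : ℝ) ^ m ≤ 3 ^ m * m.factorial := by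
  intro m
  induction m with
  | zero => simp
  | succ m ih =>
    have h3 : ((m : ℝ) + 1) ^ m ≤ 3 * (m : ℝ) ^ m := by
      rcases Nat.eq_zero_or_pos m with rfl | hm
      · norm_num
      · have hmpos : (0 : ℝ) < m := by exact_mod_cast hm
        have h2 : ((1 : ℝ) + 1 / m) ^ m ≤ 3 := by
          calc ((1 : ℝ) + 1 / m) ^ m ≤ (Real.exp (1 / m)) ^ m := by
                apply pow_le_pow_left₀ (by positivity)
                linarith [Real.add_one_le_exp (1 / (m : ℝ))]
            _ = Real.exp 1 := by
                rw [← Real.exp_nat_mul]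
                congr 1
                field_simp
            _ ≤ 3 := le_of_lt (lt_trans Real.exp_one_lt_d9 (by norm_num))
        have h1 : ((m : ℝ) + 1) ^ m = (m : ℝ) ^ m * (1 + 1 / m) ^ m := by
          rw [← mul_pow]
          congr 1
          field_simp
        rw [h1]
        calc (m : ℝ) ^ m * (1 + 1 / m) ^ m ≤ (m : ℝ) ^ m * 3 := by
              apply mul_le_mul_of_nonneg_left h2 (by positivity)
          _ = 3 * (m : ℝ) ^ m := by ring
    have hfac : ((m : ℝ)) ^ m ≤ 3 ^ m * m.factorial := ih
    calc ((m + 1 : ℕ) : ℝ) ^ (m + 1) = ((m : ℝ) + 1) ^ m * ((m : ℝ) + 1) := by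
          push_cast; ring
      _ ≤ 3 * (m : ℝ) ^ m * ((m : ℝ) + 1) := by
          apply mul_le_mul_of_nonneg_right h3 (by positivity)
      _ ≤ 3 * (3 ^ m * m.factorial) * ((m : ℝ) + 1) := by
          apply mul_le_mul_of_nonneg_right (by linarith) (by positivity)
      _ = 3 ^ (m + 1) * (m + 1).factorial := by
          push_cast [Nat.factorial_succ]
          ring

lemma quarter_pow_le (n a y : ℕ) (ha : (a : ℝ) ≤ n / 4) (hay : a + y ≤ n) :
    ((n : ℝ) / 4) ^ y ≤ ((n - a).descFactorial y : ℝ) := by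
  have han : a ≤ n := by omega
  set m := n - a with hm
  have hym : y ≤ m := by omega
  have hmr : (n : ℝ) - n / 4 ≤ m := by
    have hcast : (m : ℝ) = (n : ℝ) - a := by
      rw [hm, Nat.cast_sub han]
    linarith
  rcases Nat.eq_zero_or_pos m with hm0 | hmpos
  · have hn0 : n = 0 := by
      have h0 : (m : ℝ) = 0 := by rw [hm0]; norm_num
      have hnn : (0 : ℝ) ≤ n := Nat.cast_nonneg n
      have : (n : ℝ) ≤ 0 := by linarith
      exact_mod_cast le_antisymm (by exact_mod_cast this) (Nat.zero_le n)
    have hy0 : y = 0 := by omega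
    subst hn0; subst hy0
    simp
  · have hq : (n : ℝ) / 4 ≤ (m : ℝ) / 3 := by linarith
    have hdpos : (0 : ℝ) ≤ (m.descFactorial y : ℝ) := Nat.cast_nonneg _
    have h1 : (((m : ℝ) / 3) ^ y) ^ m ≤ ((m.descFactorial y : ℝ)) ^ m := by
      calc (((m : ℝ) / 3) ^ y) ^ m = (((m : ℝ) / 3) ^ m) ^ y := by
            rw [← pow_mul, ← pow_mul, Nat.mul_comm]
        _ ≤ ((m.factorial : ℝ)) ^ y := by
            apply pow_le_pow_left₀ (by positivity)
            rw [div_pow, div_le_iff₀ (by positivity)]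
            calc (m : ℝ) ^ m ≤ 3 ^ m * m.factorial := pow_le_three_pow_mul_factorial m
              _ = (m.factorial : ℝ) * 3 ^ m := by ring
        _ ≤ ((m.descFactorial y : ℝ)) ^ m := by
            exact_mod_cast factorial_pow_le_descFactorial_pow m y hym
    have h2 : ((m : ℝ) / 3) ^ y ≤ (m.descFactorial y : ℝ) :=
      le_of_pow_le_pow_left₀ hmpos.ne' hdpos h1
    calc ((n : ℝ) / 4) ^ y ≤ ((m : ℝ) / 3) ^ y := pow_le_pow_left₀ (by positivity) hq _
      _ ≤ _ := h2

lemma permCount_eq_zero {n : ℕ} (B : Finset (Fin n × Fin n)) (h : n < B.card) :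
    permCount B = 0 := by
  rw [permCount, Finset.card_eq_zero, Finset.filter_eq_empty_iff]
  intro σ _
  intro hsub
  have hc := Finset.card_le_card hsub
  rw [card_permGraph] at hc
  omega

/-- **Lemma 9 of the paper.** The family `Σ_n` of all permutations of `[n]`,
viewed as the family of their graphs, is `(n/4, n/4)`-spread: for every
`A ⊆ [n] × [n]` with `|A| ≤ n/4`, the family `Σ_n(A)` is `(n/4)`-spread. -/
theorem perms_spread {n : ℕ} :
    ∀ A : Finset (Fin n × Fin n), (A.card : ℝ) ≤ (n : ℝ) / 4 →
      IsSpread ((n : ℝ) / 4)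
        (restrictAt ((Finset.univ : Finset (Equiv.Perm (Fin n))).image permGraph) A) := by
  intro A hA Y
  rw [card_restrict_restrict, card_restrict_perms]
  by_cases hdisj : Disjoint Y A
  case neg =>
    have hempty : ((Finset.univ : Finset (Equiv.Perm (Fin n))).filter
        fun σ => A ⊆ permGraph σ ∧ Y ⊆ permGraph σ \ A) = ∅ := by
      rw [Finset.filter_eq_empty_iff]
      rintro σ _ ⟨h1, h2⟩
      exact hdisj (Finset.subset_sdiff.mp h2).2
    rw [hempty]
    simp only [Finset.card_empty, Nat.cast_zero]
    positivity
  case pos =>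
    have heq : ((Finset.univ : Finset (Equiv.Perm (Fin n))).filter
        fun σ => A ⊆ permGraph σ ∧ Y ⊆ permGraph σ \ A).card = permCount (A ∪ Y) := by
      rw [permCount]
      congr 1
      apply Finset.filter_congr
      intro σ _
      rw [Finset.subset_sdiff, Finset.union_subset_iff]
      constructor
      · rintro ⟨h1, h2, _⟩; exact ⟨h1, h2⟩
      · rintro ⟨h1, h2⟩; exact ⟨h1, h2, hdisj⟩
    rw [heq]
    rcases Nat.eq_zero_or_pos n with hn0 | hn
    · have hy0 : Y = ∅ := by
        apply Finset.eq_empty_of_forall_notMem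
        intro x _
        have := x.1.isLt
        omega
      subst hy0
      simp only [Finset.union_empty, Finset.card_empty, Nat.cast_zero, neg_zero, zpow_zero,
        one_mul, le_refl]
    · by_cases hbig : n < A.card + Y.card
      · have : permCount (A ∪ Y) = 0 := by
          apply permCount_eq_zero
          rw [Finset.card_union_of_disjoint hdisj.symm]
          omega
        rw [this]
        simp only [Nat.cast_zero]
        positivity
      · push_neg at hbig
        have hd := descFactorial_mul_le A Y hdisj.symm
        have h1 : ((n : ℝ) / 4) ^ Y.card ≤ ((n - A.card).descFactorial Y.card : ℝ) :=
          quarter_pow_le n A.card Y.card hA hbig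
        have h2 : ((n - A.card).descFactorial Y.card : ℝ) * (permCount (A ∪ Y) : ℝ)
            ≤ (permCount A : ℝ) := by exact_mod_cast hd
        have hpow : (0 : ℝ) < ((n : ℝ) / 4) ^ Y.card := by positivity
        rw [zpow_neg, zpow_natCast, inv_mul_eq_div, le_div_iff₀ hpow]
        calc (permCount (A ∪ Y) : ℝ) * ((n : ℝ) / 4) ^ Y.card
            ≤ (permCount (A ∪ Y) : ℝ) * ((n - A.card).descFactorial Y.card : ℝ) :=
              mul_le_mul_of_nonneg_left h1 (Nat.cast_nonneg _)
          _ = ((n - A.card).descFactorial Y.card : ℝ) * (permCount (A ∪ Y) : ℝ) := by ring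
          _ ≤ (permCount A : ℝ) := h2
end

section
/- Let n ≥ 600 and let σ be a permutation of [n]. Then the family D_{n,σ̄} of derangements of [n] that are disjoint from σ, viewed as a family of n-element subsets of [n]×[n], is (n/30, n/4)-spread: for every set A ⊂ [n]×[n] with |A| ≤ n/4, the family D_{n,σ̄}(A) is (n/30)-spread. -/
open Finset
open scoped Nat

namespace DDSaux

lemma mem_permGraph {n : ℕ} {π : Equiv.Perm (Fin n)} {p : Fin n × Fin n} :
    p ∈ permGraph π ↔ π p.1 = p.2 := by
  simp only [permGraph, Finset.mem_image, Finset.mem_univ, true_and]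
  constructor
  · rintro ⟨i, rfl⟩; rfl
  · intro h; exact ⟨p.1, by rw [h]⟩

lemma permGraph_injective {n : ℕ} : Function.Injective (permGraph (n := n)) := by
  intro π ρ h
  apply Equiv.ext
  intro i
  have : (i, π i) ∈ permGraph ρ := h ▸ mem_permGraph.2 rfl
  exact (mem_permGraph.1 this).symm

lemma card_permGraph {n : ℕ} (π : Equiv.Perm (Fin n)) : (permGraph π).card = n := by
  rw [permGraph, Finset.card_image_of_injective _ (fun i j h => congrArg Prod.fst h),
    Finset.card_univ, Fintype.card_fin]

lemma card_restrictAt {α : Type*} [DecidableEq α] (F : Finset (Finset α)) (X : Finset α) :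
    (restrictAt F X).card = (F.filter fun A => X ⊆ A).card := by
  apply Finset.card_image_of_injOn
  intro A hA B hB h
  rw [Finset.mem_coe, Finset.mem_filter] at hA hB
  simp only [] at h
  have : A \ X ∪ X = B \ X ∪ X := by rw [show A \ X = B \ X from h]
  rwa [Finset.sdiff_union_of_subset hA.2, Finset.sdiff_union_of_subset hB.2] at this


variable {n : ℕ} (σ : Equiv.Perm (Fin n))

/-- The double derangements avoiding identity and `σ`. -/
def DD : Finset (Equiv.Perm (Fin n)) :=
  Finset.univ.filter fun π : Equiv.Perm (Fin n) => (∀ i, π i ≠ i) ∧ ∀ i, π i ≠ σ i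

/-- Number of double derangements whose graph contains `S`. -/
def Ncnt (S : Finset (Fin n × Fin n)) : ℕ :=
  ((DD σ).filter fun π => S ⊆ permGraph π).card

lemma card_restrict_family (A : Finset (Fin n × Fin n)) :
    (restrictAt ((DD σ).image permGraph) A).card = Ncnt σ A := by
  rw [card_restrictAt, Finset.filter_image,
    Finset.card_image_of_injective _ permGraph_injective]
  rfl

lemma restrict_restrict_subset (F : Finset (Finset (Fin n × Fin n)))
    (A Y : Finset (Fin n × Fin n)) :
    restrictAt (restrictAt F A) Y ⊆ restrictAt F (A ∪ Y) := by
  intro B hB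
  simp only [restrictAt, Finset.mem_image, Finset.mem_filter] at hB ⊢
  obtain ⟨G', ⟨hG', hYG'⟩, rfl⟩ := hB
  obtain ⟨G, ⟨hG, hAG⟩, rfl⟩ := hG'
  refine ⟨G, ⟨hG, ?_⟩, ?_⟩
  · exact Finset.union_subset hAG (hYG'.trans (Finset.sdiff_subset))
  · ext p
    simp only [Finset.mem_sdiff, Finset.mem_union]
    tauto

lemma restrict_restrict_empty (F : Finset (Finset (Fin n × Fin n)))
    (A Y : Finset (Fin n × Fin n)) (h : ¬ Disjoint A Y) :
    restrictAt (restrictAt F A) Y = ∅ := by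
  rw [Finset.eq_empty_iff_forall_notMem]
  intro B hB
  simp only [restrictAt, Finset.mem_image, Finset.mem_filter] at hB
  obtain ⟨G', ⟨hG', hYG'⟩, rfl⟩ := hB
  obtain ⟨G, ⟨hG, hAG⟩, rfl⟩ := hG'
  apply h
  exact Finset.disjoint_left.mpr fun a haA haY => (Finset.mem_sdiff.1 (hYG' haY)).2 haA

lemma Ncnt_mono {S T : Finset (Fin n × Fin n)} (h : S ⊆ T) : Ncnt σ T ≤ Ncnt σ S := by
  apply Finset.card_le_card
  apply Finset.monotone_filter_right
  exact fun π _ hTπ => h.trans hTπ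


lemma switch (S : Finset (Fin n × Fin n)) (y : Fin n × Fin n) (hy : y ∉ S) :
    (n - S.card - 5) * Ncnt σ (insert y S) ≤ Ncnt σ S := by
  classical
  obtain ⟨r, c⟩ := y
  set T := (DD σ).filter fun π => insert (r, c) S ⊆ permGraph π with hT
  set P := (DD σ).filter fun π => S ⊆ permGraph π with hP
  set Bad : Equiv.Perm (Fin n) → Finset (Fin n) := fun π =>
    insert r (insert c (insert (σ.symm c) (insert (π.symm r) (insert (π.symm (σ r))
      (S.image Prod.fst))))) with hBad
  set Good : Equiv.Perm (Fin n) → Finset (Fin n) := fun π => Finset.univ \ Bad π with hGood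
  have hGoodcard : ∀ π, n - S.card - 5 ≤ (Good π).card := by
    intro π
    have hb : (Bad π).card ≤ S.card + 5 := by
      have h0 : (S.image Prod.fst).card ≤ S.card := Finset.card_image_le
      calc (Bad π).card ≤ (S.image Prod.fst).card + 5 := by
            simp only [hBad]
            have i1 := Finset.card_insert_le (π.symm (σ r)) (S.image Prod.fst)
            have i2 := Finset.card_insert_le (π.symm r)
              (insert (π.symm (σ r)) (S.image Prod.fst))
            have i3 := Finset.card_insert_le (σ.symm c)
              (insert (π.symm r) (insert (π.symm (σ r)) (S.image Prod.fst)))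
            have i4 := Finset.card_insert_le c (insert (σ.symm c)
              (insert (π.symm r) (insert (π.symm (σ r)) (S.image Prod.fst))))
            have i5 := Finset.card_insert_le r (insert c (insert (σ.symm c)
              (insert (π.symm r) (insert (π.symm (σ r)) (S.image Prod.fst)))))
            omega
        _ ≤ S.card + 5 := by omega
    have : (Good π).card = n - (Bad π).card := by
      rw [hGood]
      rw [Finset.card_sdiff_of_subset (Finset.subset_univ _), Finset.card_univ, Fintype.card_fin]
    omega
  -- the switching map
  have key : (T.sigma Good).card ≤ P.card := by
    have himg : ((T.sigma Good).image fun q : (_ : Equiv.Perm (Fin n)) × Fin n =>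
        q.1 * Equiv.swap r q.2) ⊆ P := by
      intro π' hπ'
      simp only [Finset.mem_image, Finset.mem_sigma] at hπ'
      obtain ⟨⟨π, r'⟩, ⟨hπT, hr'⟩, rfl⟩ := hπ'
      rw [hT, Finset.mem_filter, DD, Finset.mem_filter] at hπT
      obtain ⟨⟨-, hder, hdis⟩, hins⟩ := hπT
      have hπrc : π r = c := mem_permGraph.1 (hins (Finset.mem_insert_self _ _))
      have hSsub : S ⊆ permGraph π := fun p hp => hins (Finset.mem_insert_of_mem hp)
      rw [hGood, Finset.mem_sdiff, hBad] at hr'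
      simp only [Finset.mem_insert, Finset.mem_image, not_or, not_exists, not_and] at hr'
      obtain ⟨-, hr'r, hr'c, hr'σc, hr'πr, hr'πσr, hr'S⟩ := hr'
      have hrS : ∀ p ∈ S, p.1 ≠ r := by
        intro p hp hpr
        have h1 : π p.1 = p.2 := mem_permGraph.1 (hSsub hp)
        apply hy
        have : p = (r, c) := by
          rw [Prod.ext_iff]
          exact ⟨hpr, by rw [← h1, hpr, hπrc]⟩
        rwa [← this]
      rw [hP, Finset.mem_filter, DD, Finset.mem_filter]
      have heval : ∀ x, (π * Equiv.swap r r') x = π (Equiv.swap r r' x) := fun x => rfl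
      refine ⟨⟨Finset.mem_univ _, ?_, ?_⟩, ?_⟩
      · intro i
        rcases eq_or_ne i r with rfl | hir
        · rw [heval, Equiv.swap_apply_left]
          intro h
          exact hr'πr (by rw [← h, Equiv.symm_apply_apply])
        · rcases eq_or_ne i r' with rfl | hir'
          · rw [heval, Equiv.swap_apply_right, hπrc]
            exact fun h => hr'c h.symm
          · rw [heval, Equiv.swap_apply_of_ne_of_ne hir hir']
            exact hder i
      · intro i
        rcases eq_or_ne i r with rfl | hir
        · rw [heval, Equiv.swap_apply_left]
          intro h
          exact hr'πσr (by rw [← h, Equiv.symm_apply_apply])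
        · rcases eq_or_ne i r' with rfl | hir'
          · rw [heval, Equiv.swap_apply_right, hπrc]
            intro h
            exact hr'σc (by rw [h, Equiv.symm_apply_apply])
          · rw [heval, Equiv.swap_apply_of_ne_of_ne hir hir']
            exact hdis i
      · intro p hp
        rw [mem_permGraph, heval,
          Equiv.swap_apply_of_ne_of_ne (hrS p hp) (fun h => hr'S p hp h)]
        exact mem_permGraph.1 (hSsub hp)
    have hinj : Set.InjOn (fun q : (_ : Equiv.Perm (Fin n)) × Fin n =>
        q.1 * Equiv.swap r q.2) (T.sigma Good) := by
      rintro ⟨π, r'⟩ hq ⟨ρ, s'⟩ hq' hF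
      simp only [Finset.coe_sigma, Set.mem_sigma_iff, Finset.mem_coe] at hq hq'
      have hπrc : π r = c := by
        have := (Finset.mem_filter.1 hq.1).2
        exact mem_permGraph.1 (this (Finset.mem_insert_self _ _))
      have hρrc : ρ r = c := by
        have := (Finset.mem_filter.1 hq'.1).2
        exact mem_permGraph.1 (this (Finset.mem_insert_self _ _))
      simp only at hF
      have h1 : (π * Equiv.swap r r') r' = c := by
        simp [Equiv.Perm.mul_apply, Equiv.swap_apply_right, hπrc]
      have h2 : (π * Equiv.swap r r') s' = c := by
        rw [hF]
        simp [Equiv.Perm.mul_apply, Equiv.swap_apply_right, hρrc]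
      have hr's' : r' = s' := (π * Equiv.swap r r').injective (h1.trans h2.symm)
      subst hr's'
      have hπρ : π = ρ := by
        have := mul_right_cancel hF
        exact this
      subst hπρ
      rfl
    calc (T.sigma Good).card = ((T.sigma Good).image fun q : (_ : Equiv.Perm (Fin n)) × Fin n =>
          q.1 * Equiv.swap r q.2).card := (Finset.card_image_of_injOn hinj).symm
      _ ≤ P.card := Finset.card_le_card himg
  have hsum : T.card * (n - S.card - 5) ≤ (T.sigma Good).card := by
    rw [Finset.card_sigma]
    calc T.card * (n - S.card - 5) = ∑ _π ∈ T, (n - S.card - 5) := by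
          rw [Finset.sum_const, smul_eq_mul]
      _ ≤ ∑ π ∈ T, (Good π).card := Finset.sum_le_sum fun π _ => hGoodcard π
  have hTcard : T.card = Ncnt σ (insert (r, c) S) := rfl
  have hPcard : P.card = Ncnt σ S := rfl
  rw [← hTcard, ← hPcard, mul_comm]
  exact hsum.trans key


lemma step (S : Finset (Fin n × Fin n)) (y : Fin n × Fin n) (hy : y ∉ S) :
    Ncnt σ (insert y S) * max (n - S.card - 5) 1 ≤ Ncnt σ S := by
  rcases Nat.eq_zero_or_pos (n - S.card - 5) with h | h
  · rw [h]
    simpa using Ncnt_mono σ (Finset.subset_insert y S)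
  · rw [max_eq_left h, mul_comm]
    exact switch σ S y hy

lemma union_prod (A Y : Finset (Fin n × Fin n)) (hd : Disjoint A Y) :
    Ncnt σ (A ∪ Y) * ∏ j ∈ Finset.range Y.card, max (n - (A.card + j) - 5) 1 ≤ Ncnt σ A := by
  classical
  induction Y using Finset.induction_on with
  | empty => simpa using le_refl (Ncnt σ A)
  | @insert y Y' hyY' ih =>
    have hd' : Disjoint A Y' := hd.mono_right (Finset.subset_insert y Y')
    have hyA : y ∉ A := fun h =>
      Finset.disjoint_left.1 hd h (Finset.mem_insert_self y Y')
    rw [Finset.card_insert_of_notMem hyY', Finset.prod_range_succ,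
      Finset.union_insert]
    have hcard : (A ∪ Y').card = A.card + Y'.card := Finset.card_union_of_disjoint hd'
    have hyAY' : y ∉ A ∪ Y' := by
      simp only [Finset.mem_union, not_or]
      exact ⟨hyA, hyY'⟩
    have hstep := step σ (A ∪ Y') y hyAY'
    rw [hcard] at hstep
    calc Ncnt σ (insert y (A ∪ Y')) *
          ((∏ j ∈ Finset.range Y'.card, max (n - (A.card + j) - 5) 1) *
            max (n - (A.card + Y'.card) - 5) 1)
        = (Ncnt σ (insert y (A ∪ Y')) * max (n - (A.card + Y'.card) - 5) 1) *
            ∏ j ∈ Finset.range Y'.card, max (n - (A.card + j) - 5) 1 := by ring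
      _ ≤ Ncnt σ (A ∪ Y') * ∏ j ∈ Finset.range Y'.card, max (n - (A.card + j) - 5) 1 :=
          Nat.mul_le_mul_right _ hstep
      _ ≤ Ncnt σ A := ih hd'


lemma pow_le_three_pow_mul_factorial : ∀ t : ℕ, (t : ℝ) ^ t ≤ 3 ^ t * (t ! : ℝ)
  | 0 => by norm_num
  | (t+1) => by
    have ih := pow_le_three_pow_mul_factorial t
    rcases Nat.eq_zero_or_pos t with rfl | ht
    · norm_num
    have htR : (0:ℝ) < t := by exact_mod_cast ht
    have h2 : (1 + 1/(t:ℝ)) ^ t ≤ 3 := by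
      have h3 : (1 + 1/(t:ℝ)) ≤ Real.exp (1/t) := by
        have := Real.add_one_le_exp (1/(t:ℝ)); linarith
      calc (1 + 1/(t:ℝ)) ^ t ≤ (Real.exp (1/t)) ^ t := by
            apply pow_le_pow_left₀ (by positivity) h3
        _ = Real.exp 1 := by
            rw [← Real.exp_nat_mul, mul_one_div, div_self (ne_of_gt htR)]
        _ ≤ 3 := le_of_lt (lt_trans Real.exp_one_lt_d9 (by norm_num))
    have h1 : ((t:ℝ)+1) ^ t ≤ 3 * (t:ℝ) ^ t := by
      have e1 : ((t:ℝ)+1) = t * (1 + 1/t) := by field_simp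
      rw [e1, mul_pow]
      have hpt : (0:ℝ) ≤ (t:ℝ) ^ t := by positivity
      calc (t:ℝ) ^ t * (1 + 1/(t:ℝ)) ^ t ≤ (t:ℝ) ^ t * 3 :=
            mul_le_mul_of_nonneg_left h2 hpt
        _ = 3 * (t:ℝ) ^ t := by ring
    have hfc : ((t+1)! : ℝ) = ((t:ℝ)+1) * (t ! : ℝ) := by
      rw [Nat.factorial_succ]; push_cast; ring
    have hft : (0:ℝ) ≤ (t ! : ℝ) := by positivity
    calc ((t+1 : ℕ) : ℝ) ^ (t+1) = ((t:ℝ)+1) * ((t:ℝ)+1) ^ t := by push_cast; ring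
      _ ≤ ((t:ℝ)+1) * (3 * (t:ℝ) ^ t) := by nlinarith
      _ ≤ ((t:ℝ)+1) * (3 * (3 ^ t * (t ! : ℝ))) := by nlinarith
      _ = 3 ^ (t+1) * (((t:ℝ)+1) * (t ! : ℝ)) := by ring
      _ = 3 ^ (t+1) * ((t+1)! : ℝ) := by rw [hfc]

lemma pow5_le_two_pow (t : ℕ) (ht : 23 ≤ t) : t ^ 5 ≤ 2 ^ t := by
  induction t, ht using Nat.le_induction with
  | base => norm_num
  | succ m hm ih =>
    have h1 : 1 ≤ m := by omega
    have h4 : 23 * m ^ 4 ≤ m ^ 5 := by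
      calc 23 * m ^ 4 ≤ m * m ^ 4 := Nat.mul_le_mul_right _ hm
        _ = m ^ 5 := by ring
    have h3 : m ^ 3 ≤ m ^ 4 := Nat.pow_le_pow_right h1 (by omega)
    have h2' : m ^ 2 ≤ m ^ 3 := Nat.pow_le_pow_right h1 (by omega)
    have h1' : m ≤ m ^ 2 := by nlinarith
    have h0 : 1 ≤ m ^ 2 := by nlinarith
    have key : (m+1) ^ 5 ≤ 2 * m ^ 5 := by nlinarith
    calc (m+1) ^ 5 ≤ 2 * m ^ 5 := key
      _ ≤ 2 * 2 ^ m := Nat.mul_le_mul_left 2 ih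
      _ = 2 ^ (m+1) := by ring

lemma master_nat (t : ℕ) (ht : 23 ≤ t) : t ^ (t+5) ≤ 22 ^ (t+5) * t ! := by
  have h1 : t ^ t ≤ 3 ^ t * t ! := by exact_mod_cast pow_le_three_pow_mul_factorial t
  calc t ^ (t+5) = t ^ t * t ^ 5 := by ring
    _ ≤ (3 ^ t * t !) * 2 ^ t := Nat.mul_le_mul h1 (pow5_le_two_pow t ht)
    _ = 6 ^ t * t ! := by rw [mul_right_comm, ← Nat.mul_pow]
    _ ≤ 22 ^ (t+5) * t ! := by
        apply Nat.mul_le_mul_right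
        calc 6 ^ t ≤ 22 ^ t := Nat.pow_le_pow_left (by norm_num) t
          _ ≤ 22 ^ (t+5) := Nat.pow_le_pow_right (by norm_num) (by omega)

lemma master_real (t : ℕ) (ht : 23 ≤ t) (c : ℝ) (hc0 : 0 ≤ c) (hc : c ≤ (t:ℝ)/22) :
    c ^ (t+5) ≤ (t ! : ℝ) := by
  calc c ^ (t+5) ≤ ((t:ℝ)/22) ^ (t+5) := pow_le_pow_left₀ hc0 hc _
    _ = (t:ℝ) ^ (t+5) / 22 ^ (t+5) := div_pow _ _ _
    _ ≤ (t ! : ℝ) := by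
        rw [div_le_iff₀ (by positivity)]
        calc (t:ℝ) ^ (t+5) ≤ (22 ^ (t+5) * t ! : ℕ) := by exact_mod_cast master_nat t ht
          _ = (t ! : ℝ) * 22 ^ (t+5) := by push_cast; ring


lemma prod_ge (n a k : ℕ) (hn : 600 ≤ n) (ha : 4 * a ≤ n) (hak : a + k ≤ n) :
    ((n:ℝ)/30) ^ k ≤ ((∏ j ∈ Finset.range k, max (n - a - 5 - j) 1 : ℕ) : ℝ) := by
  set t := n - a - 5 with htdef
  have ht445 : 445 ≤ t := by omega
  have hkt5 : k ≤ t + 5 := by omega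
  have htR : ((t : ℕ) : ℝ) = (n:ℝ) - a - 5 := by
    rw [htdef, Nat.sub_sub, Nat.cast_sub (by omega)]
    push_cast; ring
  set c : ℝ := (n:ℝ)/30 with hcdef
  have hnR : (600:ℝ) ≤ (n:ℝ) := by exact_mod_cast hn
  have hc0 : (0:ℝ) ≤ c := by rw [hcdef]; positivity
  have hc20 : (20:ℝ) ≤ c := by rw [hcdef]; linarith
  have hc1 : (1:ℝ) ≤ c := by linarith
  have hct : c ≤ (t:ℝ)/22 := by
    have h22 : (22 * n : ℕ) ≤ 30 * t := by omega
    have h22R : (22:ℝ) * n ≤ 30 * t := by exact_mod_cast h22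
    rw [hcdef]
    rw [div_le_div_iff₀ (by norm_num) (by norm_num)]
    linarith
  by_cases hcase : (k:ℝ) ≤ (t:ℝ) - c
  · -- all factors are at least c
    have hkt : k ≤ t := by
      have : (k:ℝ) ≤ (t:ℝ) := by linarith
      exact_mod_cast this
    rw [Nat.cast_prod]
    calc c ^ k = ∏ _j ∈ Finset.range k, c := by
          rw [Finset.prod_const, Finset.card_range]
      _ ≤ ∏ j ∈ Finset.range k, ((max (t - j) 1 : ℕ) : ℝ) := by
          apply Finset.prod_le_prod (fun _ _ => hc0)
          intro j hj
          rw [Finset.mem_range] at hj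
          have hjk : (j:ℝ) ≤ (k:ℝ) := by exact_mod_cast hj.le
          have hjt : j ≤ t := le_trans hj.le hkt
          have e1 : ((t - j : ℕ) : ℝ) = (t:ℝ) - j := by
            rw [Nat.cast_sub hjt]
          have e2 : ((t - j : ℕ) : ℝ) ≤ ((max (t - j) 1 : ℕ) : ℝ) := by
            exact_mod_cast le_max_left (t - j) 1
          have : c ≤ ((t - j : ℕ) : ℝ) := by rw [e1]; linarith
          linarith
  · push_neg at hcase
    have hmaster : c ^ (t+5) ≤ (t ! : ℝ) := master_real t (by omega) c hc0 hct
    by_cases hkt : k ≤ t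
    · -- product equals descending factorial
      have heq : ∏ j ∈ Finset.range k, max (t - j) 1 = t.descFactorial k := by
        rw [Nat.descFactorial_eq_prod_range]
        apply Finset.prod_congr rfl
        intro j hj
        rw [Finset.mem_range] at hj
        exact max_eq_left (by omega)
      rw [heq]
      have htkc : ((t - k : ℕ) : ℝ) ≤ c := by
        rw [Nat.cast_sub hkt]
        linarith
      have hfac : ((t-k)! : ℝ) ≤ c ^ (t-k) := by
        calc ((t-k)! : ℝ) ≤ (((t-k) ^ (t-k) : ℕ) : ℝ) := by
              exact_mod_cast Nat.factorial_le_pow _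
          _ = ((t - k : ℕ) : ℝ) ^ (t-k) := by push_cast; rfl
          _ ≤ c ^ (t-k) := pow_le_pow_left₀ (by positivity) htkc _
      have hctpow : c ^ t ≤ (t ! : ℝ) :=
        le_trans (pow_le_pow_right₀ hc1 (by omega)) hmaster
      have hid : ((t-k)! : ℝ) * (t.descFactorial k : ℝ) = (t ! : ℝ) := by
        exact_mod_cast congrArg (Nat.cast : ℕ → ℝ) (Nat.factorial_mul_descFactorial hkt)
      have hpos : (0:ℝ) < ((t-k)! : ℝ) := by
        exact_mod_cast Nat.factorial_pos (t-k)
      have hchain : ((t-k)! : ℝ) * c ^ k ≤ ((t-k)! : ℝ) * (t.descFactorial k : ℝ) := by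
        calc ((t-k)! : ℝ) * c ^ k ≤ c ^ (t-k) * c ^ k := by
              apply mul_le_mul_of_nonneg_right hfac (by positivity)
          _ = c ^ t := by rw [← pow_add]; congr 1; omega
          _ ≤ (t ! : ℝ) := hctpow
          _ = ((t-k)! : ℝ) * (t.descFactorial k : ℝ) := hid.symm
      exact le_of_mul_le_mul_left hchain hpos
    · -- k > t : product is at least t!
      push_neg at hkt
      have hsub : Finset.range t ⊆ Finset.range k := Finset.range_subset_range.2 hkt.le
      have h1 : ∏ j ∈ Finset.range t, max (t - j) 1 ≤ ∏ j ∈ Finset.range k, max (t - j) 1 :=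
        Finset.prod_le_prod_of_subset_of_one_le' hsub (fun i _ _ => le_max_right _ 1)
      have h2 : ∏ j ∈ Finset.range t, max (t - j) 1 = t ! := by
        rw [← Nat.descFactorial_self t, Nat.descFactorial_eq_prod_range]
        apply Finset.prod_congr rfl
        intro j hj
        rw [Finset.mem_range] at hj
        exact max_eq_left (by omega)
      calc c ^ k ≤ c ^ (t+5) := pow_le_pow_right₀ hc1 hkt5
        _ ≤ (t ! : ℝ) := hmaster
        _ ≤ ((∏ j ∈ Finset.range k, max (t - j) 1 : ℕ) : ℝ) := by
            exact_mod_cast h2 ▸ h1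

end DDSaux

/-- **Lemma 12 of the paper.** For `n ≥ 600` and a permutation `σ` of `[n]`,
the family `D_{n,σ̄}` of derangements of `[n]` disjoint from `σ` (agreeing with
`σ` nowhere), viewed as a family of `n`-element subsets of `[n] × [n]`, is
`(n/30, n/4)`-spread: for every `A ⊆ [n] × [n]` with `|A| ≤ n/4`, the family
`D_{n,σ̄}(A)` is `(n/30)`-spread. -/
theorem double_derangements_spread {n : ℕ} (hn : 600 ≤ n) (σ : Equiv.Perm (Fin n)) :
    ∀ A : Finset (Fin n × Fin n), (A.card : ℝ) ≤ (n : ℝ) / 4 →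
      IsSpread ((n : ℝ) / 30)
        (restrictAt ((Finset.univ.filter fun π : Equiv.Perm (Fin n) =>
          (∀ i, π i ≠ i) ∧ ∀ i, π i ≠ σ i).image permGraph) A) := by
  classical
  intro A hA Y
  set F := ((Finset.univ.filter fun π : Equiv.Perm (Fin n) =>
      (∀ i, π i ≠ i) ∧ ∀ i, π i ≠ σ i).image permGraph) with hF
  have hFDD : F = (DDSaux.DD σ).image permGraph := rfl
  have hn0 : (0:ℝ) < (n:ℝ) := by
    have : (600:ℝ) ≤ (n:ℝ) := by exact_mod_cast hn
    linarith
  have h30 : (0:ℝ) < (n:ℝ)/30 := by linarith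
  have hzpow : ((n:ℝ)/30) ^ (-(Y.card:ℤ)) = (((n:ℝ)/30) ^ Y.card)⁻¹ := by
    rw [zpow_neg, zpow_natCast]
  have hRpos : (0:ℝ) < ((n:ℝ)/30) ^ Y.card := pow_pos h30 _
  have hcardA : (restrictAt F A).card = DDSaux.Ncnt σ A := by
    rw [hFDD]; exact DDSaux.card_restrict_family σ A
  by_cases hd : Disjoint A Y
  · have hle1 : (restrictAt (restrictAt F A) Y).card ≤ DDSaux.Ncnt σ (A ∪ Y) := by
      calc (restrictAt (restrictAt F A) Y).card ≤ (restrictAt F (A ∪ Y)).card :=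
            Finset.card_le_card (DDSaux.restrict_restrict_subset F A Y)
        _ = DDSaux.Ncnt σ (A ∪ Y) := by rw [hFDD]; exact DDSaux.card_restrict_family σ _
    by_cases h0 : DDSaux.Ncnt σ (A ∪ Y) = 0
    · have hz : (restrictAt (restrictAt F A) Y).card = 0 := by omega
      rw [hz]
      push_cast
      positivity
    · -- there is a double derangement containing A ∪ Y
      obtain ⟨π₀, hπ₀⟩ : ∃ π₀, (A ∪ Y) ⊆ permGraph π₀ := by
        rw [DDSaux.Ncnt] at h0
        obtain ⟨π₀, hmem⟩ := Finset.card_pos.1 (Nat.pos_of_ne_zero h0)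
        exact ⟨π₀, (Finset.mem_filter.1 hmem).2⟩
      have hak : A.card + Y.card ≤ n := by
        have h1 : (A ∪ Y).card ≤ (permGraph π₀).card := Finset.card_le_card hπ₀
        rw [Finset.card_union_of_disjoint hd, DDSaux.card_permGraph π₀] at h1
        exact h1
      have ha4 : 4 * A.card ≤ n := by
        have h4R : (4 * A.card : ℝ) ≤ (n:ℝ) := by push_cast; linarith
        exact_mod_cast h4R
      have hprod := DDSaux.union_prod σ A Y hd
      have hP : (∏ j ∈ Finset.range Y.card, max (n - (A.card + j) - 5) 1)
          = ∏ j ∈ Finset.range Y.card, max (n - A.card - 5 - j) 1 :=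
        Finset.prod_congr rfl (fun j _ => by congr 1; omega)
      rw [hP] at hprod
      have hnum := DDSaux.prod_ge n A.card Y.card hn ha4 hak
      have hprodR : (DDSaux.Ncnt σ (A ∪ Y) : ℝ) *
          ((∏ j ∈ Finset.range Y.card, max (n - A.card - 5 - j) 1 : ℕ) : ℝ)
          ≤ (DDSaux.Ncnt σ A : ℝ) := by exact_mod_cast hprod
      rw [hzpow, hcardA, inv_mul_eq_div, le_div_iff₀ hRpos]
      have hleR : ((restrictAt (restrictAt F A) Y).card : ℝ) ≤ (DDSaux.Ncnt σ (A ∪ Y) : ℝ) := by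
        exact_mod_cast hle1
      calc ((restrictAt (restrictAt F A) Y).card : ℝ) * ((n:ℝ)/30) ^ Y.card
          ≤ (DDSaux.Ncnt σ (A ∪ Y) : ℝ) * ((n:ℝ)/30) ^ Y.card := by
            apply mul_le_mul_of_nonneg_right hleR hRpos.le
        _ ≤ (DDSaux.Ncnt σ (A ∪ Y) : ℝ) *
            ((∏ j ∈ Finset.range Y.card, max (n - A.card - 5 - j) 1 : ℕ) : ℝ) := by
            apply mul_le_mul_of_nonneg_left hnum (by positivity)
        _ ≤ (DDSaux.Ncnt σ A : ℝ) := hprodR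
  · rw [DDSaux.restrict_restrict_empty F A Y hd]
    rw [hzpow]
    simp only [Finset.card_empty, Nat.cast_zero]
    positivity
end
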